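/- The solutions (𝒱,π), (𝒲,σ) to the equation (1_n, γ_n) = (𝒱,π)·(𝒲,σ) in partitioned permutations are exactly those of the form (𝒱,π) = (0_π, π) with π ∈ NC(n) and (𝒲,σ) = (0_{π⁻¹γ_n}, π⁻¹γ_n). In particular, in every such factorization 𝒱 and 𝒲 are the orbit partitions of π and σ respectively, πσ = γ_n, and |π| + |π⁻¹γ_n| = n − 1. -/

import Mathlib

open Equiv

def orbitSetoid {α : Type*} (π : Equiv.Perm α) : Setoid α where
  r := π.SameCycle
  iseqv := ⟨fun x => Equiv.Perm.SameCycle.refl π x, fun h => h.symm, fun h h' => h.trans h'⟩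

noncomputable def cycleCount {n : ℕ} (π : Equiv.Perm (Fin n)) : ℕ :=
  Nat.card (Quotient (orbitSetoid π))

noncomputable def pLen {n : ℕ} (V : Setoid (Fin n)) : ℤ :=
  (n : ℤ) - Nat.card (Quotient V)

noncomputable def permLen {n : ℕ} (π : Equiv.Perm (Fin n)) : ℤ :=
  (n : ℤ) - cycleCount π

theorem orbitSetoid_mul_le {α : Type*} (π σ : Equiv.Perm α) :
    orbitSetoid (π * σ) ≤ orbitSetoid π ⊔ orbitSetoid σ := by
  set S := orbitSetoid π ⊔ orbitSetoid σ with hS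
  have hstep : ∀ x, S x ((π * σ) x) := by
    intro x
    have h1 : S x (σ x) := Setoid.le_def.mp le_sup_right ⟨1, by simp⟩
    have h2 : S (σ x) (π (σ x)) := Setoid.le_def.mp le_sup_left ⟨1, by simp⟩
    exact S.iseqv.trans h1 h2
  have hpow : ∀ (k : ℤ) (x : α), S x (((π * σ) ^ k) x) := by
    intro k
    induction k using Int.induction_on with
    | zero => intro x; simpa using S.iseqv.refl x
    | succ k ih =>
        intro x
        have h : ((π * σ) ^ ((k : ℤ) + 1)) x = ((π * σ) ^ (k : ℤ)) ((π * σ) x) := by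
          rw [zpow_add_one]
          simp [Equiv.Perm.mul_apply]
        rw [h]
        exact S.iseqv.trans (hstep x) (ih ((π * σ) x))
    | pred k ih =>
        intro x
        have h : ((π * σ) ^ (-(k : ℤ) - 1)) x = ((π * σ) ^ (-(k : ℤ))) ((π * σ)⁻¹ x) := by
          rw [zpow_sub_one]
          simp [Equiv.Perm.mul_apply]
        rw [h]
        have hinv : S x ((π * σ)⁻¹ x) := by
          have h2 := hstep ((π * σ)⁻¹ x)
          rw [← Equiv.Perm.mul_apply, mul_inv_cancel, Equiv.Perm.one_apply] at h2
          exact S.iseqv.symm h2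
        exact S.iseqv.trans hinv (ih ((π * σ)⁻¹ x))
  rw [Setoid.le_def]
  rintro x y ⟨k, hk⟩
  exact hk ▸ hpow k x

/-- A partitioned permutation: a pair `(𝒱, π)` with `𝒱` a partition of `{1,…,n}`
(encoded as a setoid on `Fin n`) coarser than the orbit partition of `π`. -/
structure PartitionedPerm (n : ℕ) where
  part : Setoid (Fin n)
  perm : Equiv.Perm (Fin n)
  hle : orbitSetoid perm ≤ part

/-- The length `|(𝒱,π)| := 2|𝒱| − |π|` of a partitioned permutation. -/
noncomputable def ppLen {n : ℕ} (a : PartitionedPerm n) : ℤ :=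
  2 * pLen a.part - permLen a.perm

/-- The product of partitioned permutations: `(𝒱,π)·(𝒲,σ) = (𝒱∨𝒲, πσ)` if the
lengths add up, and `0` (here: `none`) otherwise. -/
noncomputable def ppMul {n : ℕ} (a b : PartitionedPerm n) : Option (PartitionedPerm n) :=
  if ppLen a + ppLen b = 2 * pLen (a.part ⊔ b.part) - permLen (a.perm * b.perm)
  then some ⟨a.part ⊔ b.part, a.perm * b.perm,
        le_trans (orbitSetoid_mul_le a.perm b.perm) (sup_le_sup a.hle b.hle)⟩
  else none

/-- The full cycle `γ_n = (1,2,…,n)`. -/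
def gammaCycle (n : ℕ) : Equiv.Perm (Fin n) := finRotate n

/-- The permutation `γ_{m,n} = (1,…,m)(m+1,…,m+n)` consisting of two full cycles. -/
def gammaTwo (m n : ℕ) : Equiv.Perm (Fin (m + n)) :=
  (Equiv.permCongr finSumFinEquiv) (Equiv.sumCongr (finRotate m) (finRotate n))

/-- The partitioned permutation `(1_n, γ_n)`. -/
noncomputable def topGamma (n : ℕ) : PartitionedPerm n :=
  ⟨⊤, gammaCycle n, le_top⟩

/-- The partitioned permutation `(1_{m+n}, γ_{m,n})`. -/
noncomputable def topGammaTwo (m n : ℕ) : PartitionedPerm (m + n) :=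
  ⟨⊤, gammaTwo m n, le_top⟩

/-- `π` is a non-crossing permutation of `{1,…,n}`: `|π| + |π⁻¹γ_n| = n − 1`. -/
def IsNC {n : ℕ} (π : Equiv.Perm (Fin n)) : Prop :=
  permLen π + permLen (π⁻¹ * gammaCycle n) = (n : ℤ) - 1

/-! With `|π| = n - #cycles(π)`, multiplying by a transposition changes the number of cycles
by at most one, and the transposition `(x πx)` splits the cycle of `π` through `x`; induction
on `|π|` then gives the triangle inequality `|πσ| ≤ |π| + |σ|`. Also `|π| ≤ |𝒱|` whenever
`0_π ≤ 𝒱`, with equality only for `𝒱 = 0_π`, so `|π| ≤ |(𝒱,π)|` with the same equality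
case. In a factorization `(1_n, γ_n) = (𝒱,π)·(𝒲,σ)` this gives
`n - 1 = |γ_n| ≤ |π| + |σ| ≤ |(𝒱,π)| + |(𝒲,σ)| = n - 1`, so every inequality is an
equality. -/

open Function

namespace Setoid

variable {α : Type*}

theorem map_of_le_surjective {S T : Setoid α} (h : S ≤ T) : Surjective (map_of_le h) := by
  rintro ⟨x⟩
  exact ⟨Quotient.mk S x, rfl⟩

theorem card_quotient_le_of_le [Finite α] {S T : Setoid α} (h : S ≤ T) :
    Nat.card (Quotient T) ≤ Nat.card (Quotient S) :=
  Nat.card_le_card_of_surjective _ (map_of_le_surjective h)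

theorem card_quotient_lt_of_lt [Finite α] {S T : Setoid α} (h : S < T) :
    Nat.card (Quotient T) < Nat.card (Quotient S) := by
  refine (card_quotient_le_of_le h.le).lt_of_ne fun hc => h.ne ?_
  have hinj : Injective (map_of_le h.le) :=
    ((Nat.bijective_iff_surjective_and_card _).mpr ⟨map_of_le_surjective h.le, hc.symm⟩).1
  exact le_antisymm h.le fun _ _ hxy => Quotient.exact (hinj (Quotient.sound hxy))

theorem card_quotient_le_card [Finite α] (S : Setoid α) : Nat.card (Quotient S) ≤ Nat.card α :=
  Nat.card_le_card_of_surjective _ Quotient.mk_surjective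

open scoped Classical in
noncomputable def merge (S : Setoid α) (a b : α) : Setoid α :=
  ker fun x => if Quotient.mk S x = Quotient.mk S b then Quotient.mk S a else Quotient.mk S x

theorem le_merge (S : Setoid α) (a b : α) : S ≤ S.merge a b :=
  fun _ _ hxy => by rw [merge, ker_def, Quotient.sound hxy]

theorem merge_rel (S : Setoid α) (a b : α) : S.merge a b a b := by
  rw [merge, ker_def, if_pos rfl, ite_self]

theorem rel_of_merge_rel {S : Setoid α} {a b x y : α} (h : S.merge a b x y)
    (hx : ¬S x b) (hy : ¬S y b) : S x y := by
  rw [merge, ker_def, if_neg (mt Quotient.exact hx), if_neg (mt Quotient.exact hy)] at h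
  exact Quotient.exact h

theorem card_quotient_le_card_quotient_merge_add_one [Finite α] (S : Setoid α) (a b : α) :
    Nat.card (Quotient S) ≤ Nat.card (Quotient (S.merge a b)) + 1 := by
  classical
  let f : Quotient S → Option (Quotient (S.merge a b)) := fun u =>
    if u = Quotient.mk S b then none else some (map_of_le (S.le_merge a b) u)
  have hf : Injective f := by
    intro u v huv
    induction u using Quotient.inductionOn with | _ x =>
    induction v using Quotient.inductionOn with | _ y =>
    by_cases hx : Quotient.mk S x = Quotient.mk S b <;>
      by_cases hy : Quotient.mk S y = Quotient.mk S b
    · rw [hx, hy]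
    · simp [f, hx, hy] at huv
    · simp [f, hx, hy] at huv
    · simp only [f, if_neg hx, if_neg hy, Option.some_inj, map_of_le, Quotient.map'_mk''] at huv
      exact Quotient.sound
        (rel_of_merge_rel (Quotient.exact huv) (mt Quotient.sound hx) (mt Quotient.sound hy))
  calc Nat.card (Quotient S) ≤ Nat.card (Option (Quotient (S.merge a b))) :=
        Nat.card_le_card_of_injective f hf
    _ = _ := Finite.card_option

end Setoid

section OrbitSetoid

variable {α : Type*}

theorem orbitSetoid_le_of_forall_rel {S : Setoid α} {π : Perm α} (h : ∀ x, S x (π x)) :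
    orbitSetoid π ≤ S := by
  let H : Subgroup (Perm α) :=
    { carrier := {g | ∀ x, S x (g x)}
      one_mem' := fun x => S.refl' x
      mul_mem' := fun hg hh x => S.trans' (hh x) (hg _)
      inv_mem' := fun {g} hg x => by simpa using S.symm' (hg (g⁻¹ x)) }
  rintro x _ ⟨k, rfl⟩
  exact H.zpow_mem (show π ∈ H from h) k x

theorem orbitSetoid_swap_le [DecidableEq α] {S : Setoid α} {a b : α} (h : S a b) :
    orbitSetoid (swap a b) ≤ S := by
  refine orbitSetoid_le_of_forall_rel fun x => ?_
  rcases eq_or_ne x a with rfl | hxa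
  · simpa using h
  rcases eq_or_ne x b with rfl | hxb
  · simpa using S.symm' h
  · rw [swap_apply_of_ne_of_ne hxa hxb]

variable [Finite α]

theorem card_quotient_orbitSetoid_le_swap_mul_add_one [DecidableEq α] (μ : Perm α) (a b : α) :
    Nat.card (Quotient (orbitSetoid μ)) ≤
      Nat.card (Quotient (orbitSetoid (swap a b * μ))) + 1 := by
  have hle : orbitSetoid (swap a b * μ) ≤ (orbitSetoid μ).merge a b :=
    (orbitSetoid_mul_le _ _).trans
      (sup_le (orbitSetoid_swap_le (Setoid.merge_rel _ a b)) (Setoid.le_merge _ a b))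
  exact (Setoid.card_quotient_le_card_quotient_merge_add_one _ a b).trans
    (Nat.add_le_add_right (Setoid.card_quotient_le_of_le hle) 1)

theorem card_quotient_orbitSetoid_lt_swap_mul [DecidableEq α] {π : Perm α} {x : α}
    (hx : π x ≠ x) :
    Nat.card (Quotient (orbitSetoid π)) <
      Nat.card (Quotient (orbitSetoid (swap x (π x) * π))) := by
  have hxπx : orbitSetoid π x (π x) := Perm.sameCycle_apply_right.2 Perm.SameCycle.rfl
  refine Setoid.card_quotient_lt_of_lt (lt_of_le_of_ne ?_ fun he => hx ?_)
  · exact (orbitSetoid_mul_le _ _).trans (sup_le (orbitSetoid_swap_le hxπx) le_rfl)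
  · have hfix : IsFixedPt (swap x (π x) * π) x := by simp [IsFixedPt]
    rw [← he] at hxπx
    exact (Perm.SameCycle.eq_of_left hxπx hfix).symm

theorem card_quotient_orbitSetoid_add_le (π σ : Perm α) :
    Nat.card (Quotient (orbitSetoid π)) + Nat.card (Quotient (orbitSetoid σ)) ≤
      Nat.card α + Nat.card (Quotient (orbitSetoid (π * σ))) := by
  classical
  induction hk : Nat.card α - Nat.card (Quotient (orbitSetoid π)) using Nat.strong_induction_on
    generalizing π with
  | _ k ih =>
  by_cases hπ : π = 1
  · subst hπ
    have hle := (orbitSetoid (1 : Perm α)).card_quotient_le_card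
    rw [one_mul]
    omega
  obtain ⟨x, hx⟩ : ∃ x, π x ≠ x := not_forall.mp fun h => hπ (Equiv.ext h)
  set ρ := swap x (π x) * π with hρ
  have hπρ : π = swap x (π x) * ρ := by rw [hρ, ← mul_assoc, swap_mul_self, one_mul]
  have hsplit : Nat.card (Quotient (orbitSetoid π)) < Nat.card (Quotient (orbitSetoid ρ)) :=
    card_quotient_orbitSetoid_lt_swap_mul hx
  have hmerge : Nat.card (Quotient (orbitSetoid (ρ * σ))) ≤
      Nat.card (Quotient (orbitSetoid (π * σ))) + 1 := by
    rw [hπρ, mul_assoc]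
    exact card_quotient_orbitSetoid_le_swap_mul_add_one (ρ * σ) x (π x)
  have hρ_le := (orbitSetoid ρ).card_quotient_le_card
  have := ih _ (by omega) ρ rfl
  omega

end OrbitSetoid

theorem permLen_mul_le {n : ℕ} (π σ : Perm (Fin n)) :
    permLen (π * σ) ≤ permLen π + permLen σ := by
  have := card_quotient_orbitSetoid_add_le π σ
  rw [Nat.card_fin] at this
  simp only [permLen, cycleCount]
  omega

theorem sameCycle_finRotate {n : ℕ} (x y : Fin n) : (finRotate n).SameCycle x y := by
  refine ⟨((y - x : Fin n) : ℕ), ?_⟩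
  rw [zpow_natCast, ← Perm.iterate_eq_pow, ← finCycle_eq_finRotate_iterate, finCycle_apply]
  have := x.neZero
  exact add_sub_cancel x y

theorem orbitSetoid_gammaCycle (n : ℕ) : orbitSetoid (gammaCycle n) = ⊤ :=
  Setoid.eq_top_iff.2 sameCycle_finRotate

theorem permLen_gammaCycle {n : ℕ} (hn : 1 ≤ n) : permLen (gammaCycle n) = n - 1 := by
  have : Nat.card (Quotient (orbitSetoid (gammaCycle n))) = 1 :=
    Nat.card_eq_one_iff_unique.2
      ⟨Quotient.subsingleton_iff.2 (orbitSetoid_gammaCycle n), ⟨Quotient.mk _ ⟨0, hn⟩⟩⟩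
  rw [permLen, cycleCount, this, Nat.cast_one]

theorem pLen_orbitSetoid {n : ℕ} (π : Perm (Fin n)) : pLen (orbitSetoid π) = permLen π := rfl

namespace PartitionedPerm

variable {n : ℕ}

theorem ext {a b : PartitionedPerm n} (hpart : a.part = b.part) (hperm : a.perm = b.perm) :
    a = b := by
  cases a; cases b; congr

theorem permLen_le_pLen (a : PartitionedPerm n) : permLen a.perm ≤ pLen a.part := by
  have := Setoid.card_quotient_le_of_le a.hle
  simp only [permLen, pLen, cycleCount]
  omega

theorem pLen_eq_permLen_iff (a : PartitionedPerm n) :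
    pLen a.part = permLen a.perm ↔ a.part = orbitSetoid a.perm := by
  refine ⟨fun h => ?_, fun h => h ▸ pLen_orbitSetoid a.perm⟩
  by_contra hne
  have := Setoid.card_quotient_lt_of_lt (lt_of_le_of_ne a.hle (Ne.symm hne))
  simp only [permLen, pLen, cycleCount] at h
  omega

theorem permLen_le_ppLen (a : PartitionedPerm n) : permLen a.perm ≤ ppLen a := by
  have := a.permLen_le_pLen
  rw [ppLen]
  omega

theorem ppLen_eq_permLen_iff (a : PartitionedPerm n) :
    ppLen a = permLen a.perm ↔ a.part = orbitSetoid a.perm := by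
  rw [← pLen_eq_permLen_iff, ppLen]
  omega

theorem ppMul_eq_some_iff {a b c : PartitionedPerm n} :
    ppMul a b = some c ↔
      c.part = a.part ⊔ b.part ∧ c.perm = a.perm * b.perm ∧ ppLen a + ppLen b = ppLen c := by
  rw [ppMul]
  split_ifs with h
  · rw [Option.some_inj]
    constructor
    · rintro rfl
      exact ⟨rfl, rfl, h⟩
    · rintro ⟨hpart, hperm, -⟩
      exact ext hpart.symm hperm.symm
  · simp only [false_iff]
    rintro ⟨hpart, hperm, hlen⟩
    exact h (by rw [hlen, ppLen, hpart, hperm])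

theorem sup_eq_top_of_perm_mul_eq_gammaCycle {a b : PartitionedPerm n}
    (h : a.perm * b.perm = gammaCycle n) : a.part ⊔ b.part = ⊤ := by
  refine top_le_iff.1 ?_
  calc ⊤ = orbitSetoid (a.perm * b.perm) := by rw [h, orbitSetoid_gammaCycle]
    _ ≤ orbitSetoid a.perm ⊔ orbitSetoid b.perm := orbitSetoid_mul_le _ _
    _ ≤ a.part ⊔ b.part := sup_le_sup a.hle b.hle

end PartitionedPerm

theorem ppLen_topGamma (n : ℕ) : ppLen (topGamma n) = permLen (gammaCycle n) := by
  change 2 * pLen ⊤ - permLen (gammaCycle n) = permLen (gammaCycle n)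
  rw [← orbitSetoid_gammaCycle n, pLen_orbitSetoid]
  ring

/-- The solutions `(𝒱,π)·(𝒲,σ) = (1_n, γ_n)` in partitioned permutations are exactly of
the form `(0_π, π)·(0_{π⁻¹γ_n}, π⁻¹γ_n)` with `π ∈ NC(n)`: in every such factorization
`𝒱` and `𝒲` are the orbit partitions of `π` and `σ`, `πσ = γ_n`, and
`|π| + |π⁻¹γ_n| = n − 1`. -/
theorem factorization_of_topGamma {n : ℕ} (hn : 1 ≤ n) (a b : PartitionedPerm n) :
    ppMul a b = some (topGamma n) ↔
      (a.part = orbitSetoid a.perm ∧ b.part = orbitSetoid b.perm ∧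
        a.perm * b.perm = gammaCycle n ∧ b.perm = a.perm⁻¹ * gammaCycle n ∧
        IsNC a.perm) := by
  rw [PartitionedPerm.ppMul_eq_some_iff, ppLen_topGamma, permLen_gammaCycle hn]
  dsimp only [topGamma]
  constructor
  · rintro ⟨-, hγ, hlen⟩
    have ha := a.permLen_le_ppLen
    have hb := b.permLen_le_ppLen
    have hbγ : b.perm = a.perm⁻¹ * gammaCycle n := eq_inv_mul_of_mul_eq hγ.symm
    have htri := permLen_mul_le a.perm b.perm
    rw [← hγ, permLen_gammaCycle hn] at htri
    refine ⟨a.ppLen_eq_permLen_iff.1 (by omega), b.ppLen_eq_permLen_iff.1 (by omega), hγ.symm,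
      hbγ, ?_⟩
    rw [IsNC, ← hbγ]
    omega
  · rintro ⟨ha, hb, hγ, hbγ, hnc⟩
    refine ⟨(PartitionedPerm.sup_eq_top_of_perm_mul_eq_gammaCycle hγ).symm, hγ.symm, ?_⟩
    rw [a.ppLen_eq_permLen_iff.2 ha, b.ppLen_eq_permLen_iff.2 hb, hbγ]
    exact hnc
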